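/- Let D = Σ_j ((P_j) − (Q_j)) be a degree-zero divisor supported on affine points of the hyperelliptic curve y² = b(x) (b monic of odd degree), with all P_j, Q_j finite and non-Weierstrass. Then the differential ω = Σ_j ( (y + y(P_j))/(x − x(P_j)) − (y + y(Q_j))/(x − x(Q_j)) )·dx/(2y) satisfies: at each finite point A, the residue of ω equals the multiplicity of D at A; in particular Res(ω) = D. Concretely: the 1-form ((y + y₀)/(x − x₀))·dx/(2y) with y₀² = b(x₀), y₀ ≠ 0, has residue +1 at (x₀, y₀), residue 0 at (x₀, −y₀), and no other finite poles. -/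

import Mathlib

/-- Residue computation for the third-kind differential
`ω = ((y + y₀)/(x − x₀))·dx/(2y)` on `y² = b(x)` (`b` monic of odd degree), at the two
points above `x = x₀` with `y₀² = b(x₀)`, `y₀ ≠ 0`. In the local parameter `s = x − x₀`,
`y` is a power series `Y` with `Y² = b(x₀ + s)`; the residue of `ω` is the constant term
of `(Y + y₀)/(2Y)`, which equals `1` at the point `(x₀, y₀)` (where `Y(0) = y₀`) and `0`
at the point `(x₀, −y₀)` (where `Y(0) = −y₀`). -/
theorem stmt_11 {K : Type*} [Field K] [CharZero K]
    (b : Polynomial K) (hb : b.Monic) (hodd : Odd b.natDegree)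
    (x₀ y₀ : K) (hy₀ : y₀ ≠ 0) (hcurve : y₀ ^ 2 = b.eval x₀)
    (Y : PowerSeries K)
    (hY : Y * Y = Polynomial.aeval (PowerSeries.C x₀ + PowerSeries.X) b) :
    (PowerSeries.coeff 0 Y = y₀ →
      PowerSeries.coeff 0 ((Y + PowerSeries.C y₀) * (2 * Y)⁻¹) = 1) ∧
    (PowerSeries.coeff 0 Y = -y₀ →
      PowerSeries.coeff 0 ((Y + PowerSeries.C y₀) * (2 * Y)⁻¹) = 0) := by
  constructor <;> intro h <;>
    simp only [PowerSeries.coeff_zero_eq_constantCoeff] at h ⊢ <;>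
    rw [map_mul, PowerSeries.constantCoeff_inv] <;>
    simp [h, hy₀, map_ofNat] <;> field_simp <;> ring
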